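/- The Gauss map is the jump transformation of the Farey map: for every irrational x ∈ (0,1), T(x) = F^{⌊1/x⌋}(x), where F^{n} denotes the n-fold iterate of the Farey map F. -/

import Mathlib

/-- The Gauss map `T : [0,1) → [0,1)`, `T 0 = 0` and `T x = 1/x - ⌊1/x⌋` for `x ≠ 0`. -/
noncomputable def gaussMap : ℝ → ℝ := fun x => if x = 0 then 0 else Int.fract (1 / x)

/-- The Farey map `F : [0,1] → [0,1]`: `F x = x/(1-x)` for `x ≤ 1/2` and
`F x = (1-x)/x` for `x ≥ 1/2`. -/
noncomputable def fareyMap : ℝ → ℝ := fun x => if x ≤ 1 / 2 then x / (1 - x) else (1 - x) / x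

/-! In the coordinate `u = 1/x`, the left branch of the Farey map is `u ↦ u - 1` and the right
branch is `u ↦ 1/(u - 1)`. So from `x = 1/u` the map subtracts one from `u` exactly
`⌊u⌋ - 1` times, reaching `1/(u - ⌊u⌋ + 1) ∈ (1/2, 1]`, and the right branch then lands on
`u - ⌊u⌋`, the fractional part of `1/x`. -/

lemma fareyMap_inv_of_two_le {u : ℝ} (hu : 2 ≤ u) : fareyMap u⁻¹ = (u - 1)⁻¹ := by
  have hle : u⁻¹ ≤ 1 / 2 := by rw [one_div]; exact inv_anti₀ two_pos hu
  rw [fareyMap, if_pos hle]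
  field_simp

lemma fareyMap_inv_of_lt_two {u : ℝ} (hu₀ : 0 < u) (hu₂ : u < 2) : fareyMap u⁻¹ = u - 1 := by
  have hlt : ¬ u⁻¹ ≤ 1 / 2 := by
    rw [not_le, one_div]; exact inv_strictAnti₀ hu₀ hu₂
  rw [fareyMap, if_neg hlt]
  field_simp

lemma fareyMap_iterate_inv {u : ℝ} {k : ℕ} (hk : k + 1 ≤ u) :
    fareyMap^[k] u⁻¹ = (u - k)⁻¹ := by
  induction k with
  | zero => simp
  | succ k ih =>
    push_cast at hk ⊢
    rw [Function.iterate_succ_apply', ih (by linarith), fareyMap_inv_of_two_le (by linarith),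
      sub_sub]

lemma fareyMap_iterate_floor_inv {u : ℝ} (hu : 1 ≤ u) :
    fareyMap^[⌊u⌋₊] u⁻¹ = Int.fract u := by
  obtain ⟨m, hm⟩ : ∃ m, ⌊u⌋₊ = m + 1 :=
    Nat.exists_eq_add_one_of_ne_zero (Nat.floor_pos.2 hu).ne'
  have hfloor_le : (m + 1 : ℝ) ≤ u := by exact_mod_cast hm ▸ Nat.floor_le (by linarith)
  have hlt_floor : u < m + 2 := by
    have := Nat.lt_floor_add_one u
    rw [hm] at this; push_cast at this; linarith
  have hfract : Int.fract u = u - (m + 1) := by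
    rw [Int.fract, ← Int.natCast_floor_eq_floor (by linarith), hm]; push_cast; rfl
  rw [hm, Function.iterate_succ_apply', fareyMap_iterate_inv (by linarith),
    fareyMap_inv_of_lt_two (by linarith) (by linarith), hfract, sub_sub]

theorem gaussMap_eq_jump_fareyMap_general (x : ℝ) (hx : x ∈ Set.Ioo (0 : ℝ) 1) :
    gaussMap x = fareyMap^[⌊1 / x⌋₊] x := by
  obtain ⟨hx₀, hx₁⟩ := hx
  have hinv : 1 ≤ 1 / x := by rw [le_div_iff₀ hx₀]; linarith
  calc gaussMap x = Int.fract (1 / x) := if_neg hx₀.ne'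
    _ = fareyMap^[⌊1 / x⌋₊] (1 / x)⁻¹ := (fareyMap_iterate_floor_inv hinv).symm
    _ = fareyMap^[⌊1 / x⌋₊] x := by rw [one_div, inv_inv]

/-- The Gauss map is the jump transformation of the Farey map: for every irrational
`x ∈ (0,1)`, `T x = F^[⌊1/x⌋] x`. -/
theorem gaussMap_eq_jump_fareyMap (x : ℝ) (hx : x ∈ Set.Ioo (0 : ℝ) 1)
    (hirr : Irrational x) :
    gaussMap x = fareyMap^[⌊1 / x⌋₊] x :=
  gaussMap_eq_jump_fareyMap_general x hx
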